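/- arXiv:1408.5360 — 4 statements merged into one kernel-verified Lean document; each statement's English description precedes it below -/
import Mathlib

section
/- Let (X,d) be a Hausdorff left K-complete T₀-quasi-pseudometric space, T : X → X, α : X × X → [0,∞), and γ a (c)-comparison function such that α(x,y)·d(Tx,Ty) ≤ γ(d(x,y)) for all x,y. Suppose T is α-admissible, there exists x₀ with α(x₀, Tx₀) ≥ 1, and T is d-sequentially continuous. Then T has a fixed point. -/
open TopologicalSpace Filter Topology

/-- Theorem 13: a Hausdorff left K-complete T₀-quasi-pseudometric space, an
`(α,γ)`-contractive, `α`-admissible, `d`-sequentially continuous map with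
`α(x₀, Tx₀) ≥ 1` for some `x₀`, has a fixed point. -/
theorem fixed_point_of_alpha_gamma_contraction {X : Type*} (d : X → X → ℝ)
    (hnn : ∀ x y, 0 ≤ d x y) (h0 : ∀ x, d x x = 0)
    (htri : ∀ x y z, d x z ≤ d x y + d y z)
    (hT0 : ∀ x y, d x y = 0 → d y x = 0 → x = y)
    -- τ(d) is Hausdorff
    (hHaus : @T2Space X
      (generateFrom {s : Set X | ∃ z : X, ∃ ε : ℝ, 0 < ε ∧ s = {y | d z y < ε}}))
    -- left K-completeness: every left K-Cauchy sequence d-converges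
    (hcomp : ∀ u : ℕ → X,
      (∀ ε : ℝ, 0 < ε → ∃ n₀ : ℕ, ∀ k n : ℕ, n₀ ≤ k → k ≤ n → d (u k) (u n) < ε) →
      ∃ x : X, Tendsto (fun n => d x (u n)) atTop (𝓝 0))
    (T : X → X) (α : X → X → ℝ) (hα : ∀ x y, 0 ≤ α x y)
    (γ : ℝ → ℝ) (hγnn : ∀ t, 0 ≤ t → 0 ≤ γ t) (hγmono : Monotone γ)
    (hγsum : ∀ t : ℝ, 0 < t → Summable (fun n : ℕ => γ^[n] t))
    -- (α,γ)-contractive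
    (hcontr : ∀ x y, α x y * d (T x) (T y) ≤ γ (d x y))
    -- α-admissible
    (hadm : ∀ x y, 1 ≤ α x y → 1 ≤ α (T x) (T y))
    (x₀ : X) (hx₀ : 1 ≤ α x₀ (T x₀))
    -- d-sequential continuity
    (hcont : ∀ (u : ℕ → X) (x : X), Tendsto (fun n => d x (u n)) atTop (𝓝 0) →
      Tendsto (fun n => d (T x) (T (u n))) atTop (𝓝 0)) :
    ∃ x : X, T x = x := by
  classical
  set t0 : ℝ := d x₀ (T x₀) + 1 with ht0
  have ht0pos : 0 < t0 := by have := hnn x₀ (T x₀); linarith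
  set u : ℕ → X := fun n => T^[n] x₀ with hu
  have husucc : ∀ n, u (n + 1) = T (u n) := fun n => Function.iterate_succ_apply' T n x₀
  have hαn : ∀ n, 1 ≤ α (u n) (u (n + 1)) := by
    intro n
    induction n with
    | zero => simpa [hu] using hx₀
    | succ n ih =>
      have := hadm _ _ ih
      simpa [husucc] using this
  have hdstep : ∀ n, d (u n) (u (n + 1)) ≤ γ^[n] t0 := by
    intro n
    induction n with
    | zero => simp [hu]; linarith
    | succ n ih =>
      have h1 : d (T (u n)) (T (u (n + 1))) ≤ α (u n) (u (n + 1)) * d (T (u n)) (T (u (n + 1))) := by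
        nlinarith [hnn (T (u n)) (T (u (n + 1))), hαn n]
      have h2 := hcontr (u n) (u (n + 1))
      have h3 : d (T (u n)) (T (u (n + 1))) ≤ γ (d (u n) (u (n + 1))) := h1.trans h2
      have h4 : γ (d (u n) (u (n + 1))) ≤ γ (γ^[n] t0) := hγmono ih
      calc d (u (n + 1)) (u (n + 2)) = d (T (u n)) (T (u (n + 1))) := by simp only [husucc]
        _ ≤ γ (γ^[n] t0) := h3.trans h4
        _ = γ^[n + 1] t0 := (Function.iterate_succ_apply' γ n t0).symm
  have hsum : Summable (fun n : ℕ => γ^[n] t0) := hγsum t0 ht0pos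
  have hγit_nn : ∀ n, 0 ≤ γ^[n] t0 := by
    intro n
    induction n with
    | zero => exact ht0pos.le
    | succ n ih =>
      rw [Function.iterate_succ_apply']
      exact hγnn _ ih
  -- chain bound
  have hchain : ∀ k n, k ≤ n → d (u k) (u n) ≤ ∑ i ∈ Finset.Ico k n, γ^[i] t0 := by
    intro k n hkn
    induction n, hkn using Nat.le_induction with
    | base => simp [h0]
    | succ n hkn ih =>
      calc d (u k) (u (n + 1)) ≤ d (u k) (u n) + d (u n) (u (n + 1)) := htri _ _ _
        _ ≤ (∑ i ∈ Finset.Ico k n, γ^[i] t0) + γ^[n] t0 := add_le_add ih (hdstep n)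
        _ = ∑ i ∈ Finset.Ico k (n + 1), γ^[i] t0 := by
            rw [Finset.sum_Ico_succ_top hkn]
  -- left K-Cauchy
  have hcauchy : ∀ ε : ℝ, 0 < ε → ∃ n₀ : ℕ, ∀ k n : ℕ, n₀ ≤ k → k ≤ n → d (u k) (u n) < ε := by
    intro ε hε
    have hS : CauchySeq (fun n => ∑ i ∈ Finset.range n, γ^[i] t0) :=
      hsum.hasSum.tendsto_sum_nat.cauchySeq
    obtain ⟨N, hN⟩ := Metric.cauchySeq_iff.mp hS ε hε
    refine ⟨N, fun k n hk hkn => ?_⟩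
    have h1 := hN n (le_trans hk hkn) k hk
    rw [Real.dist_eq] at h1
    have h2 : (∑ i ∈ Finset.range n, γ^[i] t0) - ∑ i ∈ Finset.range k, γ^[i] t0
        = ∑ i ∈ Finset.Ico k n, γ^[i] t0 := by
      rw [Finset.sum_Ico_eq_sub _ hkn]
    have h3 := hchain k n hkn
    have h4 : ∑ i ∈ Finset.Ico k n, γ^[i] t0 < ε := by
      calc ∑ i ∈ Finset.Ico k n, γ^[i] t0 = _ - _ := h2.symm
        _ ≤ |(∑ i ∈ Finset.range n, γ^[i] t0) - ∑ i ∈ Finset.range k, γ^[i] t0| := le_abs_self _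
        _ < ε := h1
    exact lt_of_le_of_lt h3 h4
  obtain ⟨x, hlim⟩ := hcomp u hcauchy
  -- shifted limit
  have hlim1 : Tendsto (fun n => d x (u (n + 1))) atTop (𝓝 0) :=
    hlim.comp (tendsto_add_atTop_nat 1)
  have hlim2 : Tendsto (fun n => d (T x) (u (n + 1))) atTop (𝓝 0) := by
    have := hcont u x hlim
    simpa [husucc] using this
  -- convergence in τ(d)
  letI : TopologicalSpace X :=
    generateFrom {s : Set X | ∃ c : X, ∃ ε : ℝ, 0 < ε ∧ s = {y | d c y < ε}}
  have key : ∀ (z : X) (v : ℕ → X), Tendsto (fun n => d z (v n)) atTop (𝓝 0) →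
      Tendsto v atTop (@nhds X
        (generateFrom {s : Set X | ∃ c : X, ∃ ε : ℝ, 0 < ε ∧ s = {y | d c y < ε}}) z) := by
    intro z v hv
    rw [tendsto_nhds_generateFrom_iff]
    rintro s ⟨c, ε, hε, rfl⟩ hzs
    have hcz : d c z < ε := hzs
    have hpos : (0 : ℝ) < ε - d c z := by linarith
    have hev : ∀ᶠ n in atTop, d z (v n) < ε - d c z :=
      hv.eventually (gt_mem_nhds hpos)
    refine hev.mono fun n hn => ?_
    have := htri c z (v n)
    simp only [Set.mem_preimage, Set.mem_setOf_eq]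
    linarith
  haveI : T2Space X := hHaus
  have c1 := key x (fun n => u (n + 1)) hlim1
  have c2 := key (T x) (fun n => u (n + 1)) hlim2
  exact ⟨x, tendsto_nhds_unique c2 c1⟩
end

section
/- For an (α,γ)-contractive α-admissible map T on a quasi-pseudometric space with α(x₀, Tx₀) ≥ 1, the Picard iterates xₙ₊₁ = Txₙ satisfy d(xₙ, xₙ₊₁) ≤ γⁿ(d(x₀,x₁)) for all n, and (xₙ) is a left K-Cauchy sequence. -/
/-- For an `(α,γ)`-contractive, `α`-admissible map `T` with `α(x₀, Tx₀) ≥ 1`, the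
Picard iterates `xₙ = Tⁿx₀` satisfy `d(xₙ, xₙ₊₁) ≤ γⁿ(d(x₀,x₁))` and form a
left K-Cauchy sequence. -/
theorem picard_iterates_leftKCauchy {X : Type*} (d : X → X → ℝ)
    (hnn : ∀ x y, 0 ≤ d x y) (h0 : ∀ x, d x x = 0)
    (htri : ∀ x y z, d x z ≤ d x y + d y z)
    (T : X → X) (α : X → X → ℝ) (hα : ∀ x y, 0 ≤ α x y)
    (γ : ℝ → ℝ) (hγnn : ∀ t, 0 ≤ t → 0 ≤ γ t) (hγmono : Monotone γ)
    (hγsum : ∀ t : ℝ, 0 < t → Summable (fun n : ℕ => γ^[n] t))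
    (hcontr : ∀ x y, α x y * d (T x) (T y) ≤ γ (d x y))
    (hadm : ∀ x y, 1 ≤ α x y → 1 ≤ α (T x) (T y))
    (x₀ : X) (hx₀ : 1 ≤ α x₀ (T x₀)) :
    (∀ n : ℕ, d (T^[n] x₀) (T^[n + 1] x₀) ≤ γ^[n] (d x₀ (T x₀))) ∧
    (∀ ε : ℝ, 0 < ε → ∃ n₀ : ℕ, ∀ k n : ℕ, n₀ ≤ k → k ≤ n →
      d (T^[k] x₀) (T^[n] x₀) < ε) := by
  set D := d x₀ (T x₀) with hD
  -- nonnegativity of iterates of γ on nonneg inputs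
  have hiter_nn : ∀ (n : ℕ) (t : ℝ), 0 ≤ t → 0 ≤ γ^[n] t := by
    intro n
    induction n with
    | zero => intro t ht; simpa using ht
    | succ n ih =>
      intro t ht
      rw [Function.iterate_succ_apply']
      exact hγnn _ (ih t ht)
  have hiter_mono : ∀ (n : ℕ), Monotone (γ^[n]) := fun n => hγmono.iterate n
  -- α ≥ 1 along iterates
  have hα1 : ∀ n : ℕ, 1 ≤ α (T^[n] x₀) (T^[n + 1] x₀) := by
    intro n
    induction n with
    | zero => simpa using hx₀
    | succ n ih =>
      rw [Function.iterate_succ_apply', Function.iterate_succ_apply']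
      exact hadm _ _ ih
  -- main estimate
  have hmain : ∀ n : ℕ, d (T^[n] x₀) (T^[n + 1] x₀) ≤ γ^[n] D := by
    intro n
    induction n with
    | zero => simp [hD]
    | succ n ih =>
      have h1 : d (T^[n + 1] x₀) (T^[n + 2] x₀)
          ≤ α (T^[n] x₀) (T^[n + 1] x₀) * d (T^[n + 1] x₀) (T^[n + 2] x₀) := by
        nlinarith [hα1 n, hnn (T^[n + 1] x₀) (T^[n + 2] x₀)]
      have h2 : α (T^[n] x₀) (T^[n + 1] x₀) * d (T (T^[n] x₀)) (T (T^[n + 1] x₀))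
          ≤ γ (d (T^[n] x₀) (T^[n + 1] x₀)) := hcontr _ _
      rw [← Function.iterate_succ_apply' T n x₀, ← Function.iterate_succ_apply' T (n+1) x₀] at h2
      have h3 : γ (d (T^[n] x₀) (T^[n + 1] x₀)) ≤ γ (γ^[n] D) := hγmono ih
      rw [Function.iterate_succ_apply' γ]
      exact h1.trans (h2.trans h3)
  refine ⟨hmain, ?_⟩
  intro ε hε
  set t : ℝ := D + 1 with ht
  have htpos : 0 < t := by have := hnn x₀ (T x₀); rw [ht]; linarith
  have hDt : D ≤ t := by rw [ht]; linarith
  have hsum := hγsum t htpos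
  have hbound : ∀ n : ℕ, d (T^[n] x₀) (T^[n + 1] x₀) ≤ γ^[n] t :=
    fun n => (hmain n).trans (hiter_mono n hDt)
  -- sum bound for d between iterates
  have hsumbound : ∀ k n : ℕ, k ≤ n →
      d (T^[k] x₀) (T^[n] x₀) ≤ ∑ i ∈ Finset.Ico k n, γ^[i] t := by
    intro k n hkn
    induction n, hkn using Nat.le_induction with
    | base => simp [h0]
    | succ n hkn ih =>
      have := htri (T^[k] x₀) (T^[n] x₀) (T^[n + 1] x₀)
      rw [Finset.sum_Ico_succ_top hkn]
      linarith [hbound n]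
  -- tails tend to zero
  have htail := tendsto_sum_nat_add (fun n => γ^[n] t)
  have := (htail.eventually (gt_mem_nhds hε)).exists_forall_of_atTop
  obtain ⟨n₀, hn₀⟩ := this
  refine ⟨n₀, fun k n hk hkn => ?_⟩
  have htailk : (∑' j : ℕ, γ^[j + k] t) < ε := hn₀ k hk
  have hfin : ∑ i ∈ Finset.Ico k n, γ^[i] t ≤ ∑' j : ℕ, γ^[j + k] t := by
    rw [Finset.sum_Ico_eq_sum_range]
    have hsk : Summable (fun j : ℕ => γ^[j + k] t) := (summable_nat_add_iff k).mpr hsum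
    have := Summable.sum_le_tsum (Finset.range (n - k))
      (fun j _ => hiter_nn (j + k) t htpos.le) hsk
    simpa [add_comm] using this
  calc d (T^[k] x₀) (T^[n] x₀) ≤ _ := hsumbound k n hkn
    _ ≤ ∑' j : ℕ, γ^[j + k] t := hfin
    _ < ε := htailk
end

section
/- Let (X,d) be a bicomplete T₀-quasi-pseudometric space and F : X → CB(X) satisfy H(Fx, Fy) ≤ k·d(x,y) for all x,y with 0 ≤ k < 1. If F has the approximate mix-point property, then F has a fixed point. -/
open ENNReal Filter Topology

/-- The extended Hausdorff-type quasi-pseudometric `H` associated with `d`. -/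
noncomputable def Hd {X : Type*} (d : X → X → ℝ) (A B : Set X) : ℝ≥0∞ :=
  max (⨆ a ∈ A, ⨅ b ∈ B, ENNReal.ofReal (d a b))
      (⨆ b ∈ B, ⨅ a ∈ A, ENNReal.ofReal (d a b))

/-- Corollary 30 / Theorem 31: a `k`-contractive set-valued map `F : X → CB(X)` on a
bicomplete T₀-quasi-pseudometric space with the approximate mix-point property has a
fixed point. -/
theorem fixed_point_of_approx_mixpoint {X : Type*} [Nonempty X]
    (d : X → X → ℝ)
    (hnn : ∀ x y, 0 ≤ d x y) (h0 : ∀ x, d x x = 0)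
    (htri : ∀ x y z, d x z ≤ d x y + d y z)
    (hT0 : ∀ x y, d x y = 0 → d y x = 0 → x = y)
    (hbicomp : ∀ u : ℕ → X,
      (∀ ε : ℝ, 0 < ε → ∃ n₀ : ℕ, ∀ m n : ℕ, n₀ ≤ m → n₀ ≤ n →
        max (d (u m) (u n)) (d (u n) (u m)) < ε) →
      ∃ x : X, Tendsto (fun n => max (d x (u n)) (d (u n) x)) atTop (𝓝 0))
    (F : X → Set X)
    (hFne : ∀ x, (F x).Nonempty)
    (hFbd : ∀ x, ∃ M : ℝ, ∀ a ∈ F x, ∀ b ∈ F x, d a b ≤ M)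
    (hFcl : ∀ x : X, ∀ (u : ℕ → X) (y : X), (∀ n, u n ∈ F x) →
      Tendsto (fun n => max (d y (u n)) (d (u n) y)) atTop (𝓝 0) → y ∈ F x)
    (k : ℝ) (hk0 : 0 ≤ k) (hk1 : k < 1)
    (hcontr : ∀ x y : X, Hd d (F x) (F y) ≤ ENNReal.ofReal (k * d x y))
    -- approximate mix-point property
    (hamp : (⨅ x : X, ⨆ y ∈ F x, ENNReal.ofReal (max (d x y) (d y x))) = 0) :
    ∃ x : X, x ∈ F x := by

  have h1k : (0:ℝ) < 1 - k := by linarith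
  have hpow : Tendsto (fun n : ℕ => (1/2 : ℝ)^n) atTop (𝓝 0) :=
    tendsto_pow_atTop_nhds_zero_of_lt_one (by norm_num) (by norm_num)
  -- extraction lemma from the contraction hypothesis
  have hEx : ∀ x y : X, ∀ a ∈ F x, ∀ δ : ℝ, 0 < δ → ∃ b ∈ F y, d a b < k * d x y + δ := by
    intro x y a ha δ hδ
    have hk' : 0 ≤ k * d x y := mul_nonneg hk0 (hnn x y)
    have h1 : (⨅ b ∈ F y, ENNReal.ofReal (d a b)) ≤ ENNReal.ofReal (k * d x y) := by
      calc (⨅ b ∈ F y, ENNReal.ofReal (d a b))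
          ≤ ⨆ a ∈ F x, ⨅ b ∈ F y, ENNReal.ofReal (d a b) := le_biSup (fun a => ⨅ b ∈ F y, ENNReal.ofReal (d a b)) ha
        _ ≤ Hd d (F x) (F y) := le_max_left _ _
        _ ≤ _ := hcontr x y
    have h2 : (⨅ b ∈ F y, ENNReal.ofReal (d a b)) < ENNReal.ofReal (k * d x y + δ) :=
      lt_of_le_of_lt h1 ((ENNReal.ofReal_lt_ofReal_iff (by linarith)).mpr (by linarith))
    simp only [iInf_lt_iff] at h2
    obtain ⟨b, hb, hlt⟩ := h2
    exact ⟨b, hb, (ENNReal.ofReal_lt_ofReal_iff (by linarith)).mp hlt⟩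
  -- key quantitative estimate
  have hKey : ∀ x y : X, ∀ p q : ℝ,
      (∀ a ∈ F x, max (d x a) (d a x) ≤ p) → (∀ b ∈ F y, max (d y b) (d b y) ≤ q) →
      max (d x y) (d y x) ≤ (p + q) / (1 - k) := by
    intro x y p q hp hq
    have hxy : (1 - k) * d x y ≤ p + q := by
      have h : ∀ δ : ℝ, 0 < δ → d x y ≤ (p + k * d x y + q) + δ := by
        intro δ hδ
        obtain ⟨a, ha⟩ := hFne x
        obtain ⟨b, hb, hab⟩ := hEx x y a ha δ hδ
        have hxa : d x a ≤ p := le_trans (le_max_left _ _) (hp a ha)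
        have hby : d b y ≤ q := le_trans (le_max_right _ _) (hq b hb)
        have t1 := htri x a y
        have t2 := htri a b y
        linarith
      have := le_of_forall_pos_le_add h
      linarith
    have hyx : (1 - k) * d y x ≤ p + q := by
      have h : ∀ δ : ℝ, 0 < δ → d y x ≤ (p + k * d y x + q) + δ := by
        intro δ hδ
        obtain ⟨b, hb⟩ := hFne y
        obtain ⟨a, ha, hba⟩ := hEx y x b hb δ hδ
        have hyb : d y b ≤ q := le_trans (le_max_left _ _) (hq b hb)
        have hax : d a x ≤ p := le_trans (le_max_right _ _) (hp a ha)
        have t1 := htri y b x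
        have t2 := htri b a x
        linarith
      have := le_of_forall_pos_le_add h
      linarith
    refine max_le ?_ ?_
    · rw [le_div_iff₀ h1k]; nlinarith
    · rw [le_div_iff₀ h1k]; nlinarith
  -- the approximating sequence
  have hseq : ∀ n : ℕ, ∃ z : X, ∀ a ∈ F z, max (d z a) (d a z) ≤ (1/2 : ℝ)^n := by
    intro n
    have hεpos : (0:ℝ) < (1/2 : ℝ)^n := by positivity
    have hlt : (⨅ x : X, ⨆ y ∈ F x, ENNReal.ofReal (max (d x y) (d y x)))
        < ENNReal.ofReal ((1/2 : ℝ)^n) := by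
      rw [hamp]
      exact ENNReal.ofReal_pos.mpr hεpos
    obtain ⟨z, hz⟩ := iInf_lt_iff.mp hlt
    refine ⟨z, fun a ha => ?_⟩
    have h1 : ENNReal.ofReal (max (d z a) (d a z))
        ≤ ⨆ y ∈ F z, ENNReal.ofReal (max (d z y) (d y z)) := le_biSup (fun y => ENNReal.ofReal (max (d z y) (d y z))) ha
    exact le_of_lt ((ENNReal.ofReal_lt_ofReal_iff hεpos).mp (lt_of_le_of_lt h1 hz))
  choose xs hxs using hseq
  -- Cauchy
  have hCauchy : ∀ ε : ℝ, 0 < ε → ∃ n₀ : ℕ, ∀ m n : ℕ, n₀ ≤ m → n₀ ≤ n →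
      max (d (xs m) (xs n)) (d (xs n) (xs m)) < ε := by
    intro ε hε
    obtain ⟨n₀, hn₀⟩ := exists_pow_lt_of_lt_one (show (0:ℝ) < ε * (1 - k) / 2 by positivity)
      (show (1/2 : ℝ) < 1 by norm_num)
    refine ⟨n₀, fun m n hm hn => ?_⟩
    have h := hKey (xs m) (xs n) _ _ (hxs m) (hxs n)
    have hpm : (1/2 : ℝ)^m ≤ (1/2)^n₀ := pow_le_pow_of_le_one (by norm_num) (by norm_num) hm
    have hpn : (1/2 : ℝ)^n ≤ (1/2)^n₀ := pow_le_pow_of_le_one (by norm_num) (by norm_num) hn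
    have hdiv : ((1/2:ℝ)^m + (1/2)^n) / (1 - k) < ε := by
      rw [div_lt_iff₀ h1k]; nlinarith
    exact lt_of_le_of_lt h hdiv
  obtain ⟨x, hx⟩ := hbicomp xs hCauchy
  have hd1 : Tendsto (fun n => d x (xs n)) atTop (𝓝 0) :=
    squeeze_zero (fun n => hnn _ _) (fun n => le_max_left _ _) hx
  have hd2 : Tendsto (fun n => d (xs n) x) atTop (𝓝 0) :=
    squeeze_zero (fun n => hnn _ _) (fun n => le_max_right _ _) hx
  choose ys hys using fun n => hFne (xs n)
  choose us hus hdus using fun n => hEx (xs n) x (ys n) (hys n) ((1/2 : ℝ)^n) (by positivity)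
  -- d x (us n) → 0
  have hxu : Tendsto (fun n => d x (us n)) atTop (𝓝 0) := by
    have hbnd : ∀ n, d x (us n) ≤ d x (xs n) + ((1/2:ℝ)^n + (k * d (xs n) x + (1/2)^n)) := by
      intro n
      have t1 := htri x (xs n) (us n)
      have t2 := htri (xs n) (ys n) (us n)
      have h1 : d (xs n) (ys n) ≤ (1/2:ℝ)^n := le_trans (le_max_left _ _) (hxs n _ (hys n))
      have h2 := le_of_lt (hdus n)
      linarith
    have hg : Tendsto (fun n => d x (xs n) + ((1/2:ℝ)^n + (k * d (xs n) x + (1/2)^n)))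
        atTop (𝓝 0) := by
      have := hd1.add (hpow.add ((hd2.const_mul k).add hpow))
      simpa using this
    exact squeeze_zero (fun n => hnn _ _) hbnd hg
  -- d (us n) x = 0
  have hux0 : ∀ n, d (us n) x = 0 := by
    intro n
    refine le_antisymm ?_ (hnn _ _)
    have h : ∀ ε : ℝ, 0 < ε → d (us n) x ≤ 0 + ε := by
      intro ε hε
      have htend : Tendsto (fun m => k * d x (xs m) + (1/2:ℝ)^m + d (xs m) x) atTop (𝓝 0) := by
        have := ((hd1.const_mul k).add hpow).add hd2
        simpa using this
      obtain ⟨m, hm⟩ := (htend.eventually_lt_const (half_pos hε)).exists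
      obtain ⟨a, ha, hda⟩ := hEx x (xs m) (us n) (hus n) (ε/2) (half_pos hε)
      have h1 : d a (xs m) ≤ (1/2:ℝ)^m := le_trans (le_max_right _ _) (hxs m a ha)
      have t1 := htri (us n) a x
      have t2 := htri a (xs m) x
      linarith
    linarith [le_of_forall_pos_le_add h]
  refine ⟨x, hFcl x us x hus ?_⟩
  have heq : (fun n => max (d x (us n)) (d (us n) x)) = fun n => d x (us n) := by
    funext n; rw [hux0 n]; exact max_eq_left (hnn _ _)
  rw [heq]
  exact hxu
end

section
/- Let (X,d) be a bicomplete T₀-quasi-pseudometric space and f : X → X satisfy d(fx, fy) ≤ ψ(d(x,y)) for all x,y, where ψ : [0,∞) → [0,∞) is upper semicontinuous, ψ(t) < t for all t > 0, and liminf_{t→∞}(t − ψ(t)) > 0. Then inf_{x∈X} d(x, fx) = 0, i.e., f has the approximate startpoint property. -/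
open Filter Topology

/-- Theorem 32: a `ψ`-contractive self-map of a bicomplete T₀-quasi-pseudometric
space has the approximate startpoint property: `inf_{x} d(x, fx) = 0`. -/
theorem approximate_startpoint_property {X : Type*} [Nonempty X]
    (d : X → X → ℝ)
    (hnn : ∀ x y, 0 ≤ d x y) (h0 : ∀ x, d x x = 0)
    (htri : ∀ x y z, d x z ≤ d x y + d y z)
    (hT0 : ∀ x y, d x y = 0 → d y x = 0 → x = y)
    (hbicomp : ∀ u : ℕ → X,
      (∀ ε : ℝ, 0 < ε → ∃ n₀ : ℕ, ∀ m n : ℕ, n₀ ≤ m → n₀ ≤ n →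
        max (d (u m) (u n)) (d (u n) (u m)) < ε) →
      ∃ x : X, Tendsto (fun n => max (d x (u n)) (d (u n) x)) atTop (𝓝 0))
    (f : X → X)
    (ψ : ℝ → ℝ) (hψnn : ∀ t, 0 ≤ t → 0 ≤ ψ t)
    (hψusc : UpperSemicontinuous ψ) (hψlt : ∀ t : ℝ, 0 < t → ψ t < t)
    (hψliminf : 0 < liminf (fun t : ℝ => t - ψ t) atTop)
    (hcontr : ∀ x y : X, d (f x) (f y) ≤ ψ (d x y)) :
    (⨅ x : X, d x (f x)) = 0 := by
  have hbdd : BddBelow (Set.range fun x => d x (f x)) := by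
    refine ⟨0, ?_⟩
    rintro r ⟨x, rfl⟩
    exact hnn x (f x)
  have hlow : (0 : ℝ) ≤ ⨅ x : X, d x (f x) := le_ciInf fun x => hnn x (f x)
  refine le_antisymm ?_ hlow
  set x0 : X := Classical.arbitrary X
  set u : ℕ → X := fun n => f^[n] x0 with hu
  set a : ℕ → ℝ := fun n => d (u n) (u (n + 1)) with ha
  have hinf_le : ∀ n, (⨅ x : X, d x (f x)) ≤ a n := by
    intro n
    have : a n = d (u n) (f (u n)) := by
      simp [ha, hu, Function.iterate_succ_apply']
    rw [this]
    exact ciInf_le hbdd (u n)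
  by_cases hzero : ∃ n, a n = 0
  · obtain ⟨n, hn⟩ := hzero
    calc (⨅ x : X, d x (f x)) ≤ a n := hinf_le n
    _ = 0 := hn
  push_neg at hzero
  have hapos : ∀ n, 0 < a n := fun n =>
    lt_of_le_of_ne (hnn _ _) (Ne.symm (hzero n))
  have hstep : ∀ n, a (n + 1) ≤ ψ (a n) := by
    intro n
    have : a (n + 1) = d (f (u n)) (f (u (n + 1))) := by
      simp [ha, hu, Function.iterate_succ_apply']
    rw [this]
    exact hcontr _ _
  have hanti : Antitone a := by
    refine antitone_nat_of_succ_le fun n => ?_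
    exact (hstep n).trans (hψlt _ (hapos n)).le
  set L : ℝ := ⨅ n, a n with hL
  have habdd : BddBelow (Set.range a) := by
    refine ⟨0, ?_⟩
    rintro r ⟨n, rfl⟩
    exact (hapos n).le
  have htend : Tendsto a atTop (𝓝 L) := tendsto_atTop_ciInf hanti habdd
  have hLnn : 0 ≤ L := le_ciInf fun n => (hapos n).le
  have hLzero : L = 0 := by
    by_contra hne
    have hLpos : 0 < L := lt_of_le_of_ne hLnn (Ne.symm hne)
    have hψL : ψ L < (ψ L + L) / 2 := by linarith [hψlt L hLpos]
    have hyL : (ψ L + L) / 2 < L := by linarith [hψlt L hLpos]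
    have hev : ∀ᶠ t in 𝓝 L, ψ t < (ψ L + L) / 2 := hψusc L _ hψL
    have hev2 : ∀ᶠ n in atTop, ψ (a n) < (ψ L + L) / 2 := htend.eventually hev
    obtain ⟨n, hn⟩ := hev2.exists
    have : L ≤ a (n + 1) := ciInf_le habdd (n + 1)
    have : L ≤ ψ (a n) := this.trans (hstep n)
    linarith
  have htend0 : Tendsto a atTop (𝓝 0) := hLzero ▸ htend
  exact ge_of_tendsto htend0 (Eventually.of_forall hinf_le)
end
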